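/- Let f : ℝ² → ℝ be C¹ with ∇f(p₀) ≠ 0. Then in a neighborhood of p₀, the level set {p : f(p) = f(p₀)} is the image of an integral curve of the Hamiltonian vector field H_f = (-∂f/∂y, ∂f/∂x); that is, there exists δ > 0 and an integral curve γ : (-δ, δ) → ℝ² of H_f with γ(0) = p₀ whose image is exactly a relatively open neighborhood of p₀ in the level set. -/

import Mathlib

/-!
If `∂f/∂y (p₀) ≠ 0`, the implicit function theorem writes the level set of `f` near `p₀` as a graph
`y = ψ x`, and differentiating `f (x, ψ x) = f p₀` shows that on this graph
`H_f = -∂f/∂y · (1, ψ')`. Hence `γ t = (ξ t, ψ (ξ t))` is an integral curve of `H_f` once `ξ` solves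
the scalar autonomous equation `ξ' = h ξ` with `h x = -∂f/∂y (x, ψ x)`, which is continuous and
nonzero near `p₀.1`; such a `ξ` is the local inverse of an antiderivative of `1 / h`.
If instead `∂f/∂y (p₀) = 0`, then `∂f/∂x (p₀) ≠ 0`, and we apply this to `-f ∘ swap`, whose
Hamiltonian field is `H_f` conjugated by the swap.
-/

open Set Filter Topology

theorem exists_hasDerivAt_of_continuousOn {E : Type*} [NormedAddCommGroup E] [NormedSpace ℝ E]
    [CompleteSpace E] {φ : ℝ → E} {s : Set ℝ} {x₀ : ℝ} (hs : s ∈ 𝓝 x₀) (hφ : ContinuousOn φ s) :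
    ∃ F : ℝ → E, F x₀ = 0 ∧ ∀ᶠ x in 𝓝 x₀, HasDerivAt F (φ x) x := by
  obtain ⟨a, b, hab, hsub⟩ := mem_nhds_iff_exists_Ioo_subset.1 hs
  refine ⟨fun x => ∫ y in x₀..x, φ y, intervalIntegral.integral_same, ?_⟩
  filter_upwards [Ioo_mem_nhds hab.1 hab.2] with x hx
  have hφ' : ContinuousOn φ (Ioo a b) := hφ.mono hsub
  exact intervalIntegral.integral_hasDerivAt_right
    (hφ'.mono (ordConnected_Ioo.uIcc_subset hab hx)).intervalIntegrable
    (hφ'.stronglyMeasurableAtFilter isOpen_Ioo x hx) (hφ'.continuousAt (Ioo_mem_nhds hx.1 hx.2))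

theorem exists_autonomous_ode_solution {h : ℝ → ℝ} {s : Set ℝ} {x₀ : ℝ} (hs : IsOpen s)
    (hx₀ : x₀ ∈ s) (hh : ContinuousOn h s) (h₀ : h x₀ ≠ 0) :
    ∃ δ > 0, ∃ ξ : ℝ → ℝ, ξ 0 = x₀ ∧ MapsTo ξ (Ioo (-δ) δ) s ∧
      (∀ t ∈ Ioo (-δ) δ, HasDerivAt ξ (h (ξ t)) t) ∧ ξ '' Ioo (-δ) δ ∈ 𝓝 x₀ := by
  set u := s ∩ h ⁻¹' {0}ᶜ
  have hu : IsOpen u := hh.isOpen_inter_preimage hs isOpen_compl_singleton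
  have hx₀u : x₀ ∈ u := ⟨hx₀, h₀⟩
  have hinv : ContinuousOn (fun x => (h x)⁻¹) u :=
    (hh.mono inter_subset_left).inv₀ fun x hx => hx.2
  obtain ⟨F, hF₀, hF⟩ := exists_hasDerivAt_of_continuousOn (hu.mem_nhds hx₀u) hinv
  obtain ⟨v, hvF, hv, hx₀v⟩ := eventually_nhds_iff.1 (hF.and (hu.mem_nhds hx₀u))
  have hstrict : HasStrictDerivAt F (h x₀)⁻¹ x₀ :=
    hasStrictDerivAt_of_hasDerivAt_of_continuousAt hF (hinv.continuousAt (hu.mem_nhds hx₀u))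
  set Ψ := ((hstrict.hasStrictFDerivAt_equiv (inv_ne_zero h₀)).toOpenPartialHomeomorph F).restrOpen
    v hv
  have hx₀Ψ : x₀ ∈ Ψ.source := ⟨HasStrictFDerivAt.mem_toOpenPartialHomeomorph_source _, hx₀v⟩
  have h0Ψ : (0 : ℝ) ∈ Ψ.target := hF₀ ▸ Ψ.map_source hx₀Ψ
  obtain ⟨δ, hδ, hball⟩ := Metric.isOpen_iff.1 Ψ.open_target 0 h0Ψ
  have hIΨ : Ioo (-δ) δ ⊆ Ψ.target := by simpa [Real.ball_eq_Ioo] using hball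
  have hΨv : ∀ t ∈ Ioo (-δ) δ, Ψ.symm t ∈ v := fun t ht => (Ψ.map_target (hIΨ ht)).2
  have hΨ₀ : Ψ.symm 0 = x₀ := hF₀ ▸ Ψ.left_inv hx₀Ψ
  refine ⟨δ, hδ, Ψ.symm, hΨ₀, fun t ht => ((hvF _ (hΨv t ht)).2).1, fun t ht => ?_, ?_⟩
  · simpa using Ψ.hasDerivAt_symm (hIΨ ht) (inv_ne_zero ((hvF _ (hΨv t ht)).2.2))
      ((hvF _ (hΨv t ht)).1)
  · refine (Ψ.symm.isOpen_image_of_subset_source isOpen_Ioo hIΨ).mem_nhds ⟨0, ?_, hΨ₀⟩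
    simpa using hδ

theorem ContDiffAt.exists_levelSet_inter_eq_graph {𝕜 : Type*} [RCLike 𝕜]
    {E₁ : Type*} [NormedAddCommGroup E₁] [NormedSpace 𝕜 E₁] [CompleteSpace E₁]
    {E₂ : Type*} [NormedAddCommGroup E₂] [NormedSpace 𝕜 E₂] [CompleteSpace E₂]
    {F : Type*} [NormedAddCommGroup F] [NormedSpace 𝕜 F] [CompleteSpace F]
    {f : E₁ × E₂ → F} {u : E₁ × E₂} (hf : ContDiffAt 𝕜 1 f u)
    (hf₂ : (fderiv 𝕜 f u ∘L .inr 𝕜 E₁ E₂).IsInvertible) :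
    ∃ ψ : E₁ → E₂, ∃ s : Set E₁, IsOpen s ∧ u.1 ∈ s ∧ ψ u.1 = u.2 ∧
      (∀ x ∈ s, DifferentiableAt 𝕜 ψ x) ∧
      ∃ U ∈ 𝓝 u, ∀ t ⊆ s, {p | f p = f u} ∩ (U ∩ Prod.fst ⁻¹' t) = (fun x => (x, ψ x)) '' t := by
  set ψ := hf.implicitFunction one_ne_zero hf₂
  have hψ₀ : ψ u.1 = u.2 := hf.implicitFunction_apply_self one_ne_zero hf₂
  obtain ⟨s₁, hs₁ψ, hs₁, hus₁⟩ := eventually_nhds_iff.1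
    ((hf.contDiffAt_implicitFunction one_ne_zero hf₂).eventually (by simp))
  have hψ : ∀ x ∈ s₁, DifferentiableAt 𝕜 ψ x := fun x hx => (hs₁ψ x hx).differentiableAt one_ne_zero
  set U := interior {v : E₁ × E₂ | f v = f u ↔ ψ v.1 = v.2}
  have hU : U ∈ 𝓝 u := interior_mem_nhds.2 (hf.eventually_apply_eq_iff_implicitFunction _ _)
  set s := s₁ ∩ (fun x => (x, ψ x)) ⁻¹' U
  have hs : IsOpen s := ContinuousOn.isOpen_inter_preimage
    (continuousOn_id.prodMk fun x hx => (hψ x hx).continuousAt.continuousWithinAt) hs₁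
    isOpen_interior
  refine ⟨ψ, s, hs, ⟨hus₁, by simpa [hψ₀] using mem_of_mem_nhds hU⟩, hψ₀,
    fun x hx => hψ x hx.1, U, hU, fun t hts => ?_⟩
  ext p
  constructor
  · rintro ⟨hfp, hpU, hpt⟩
    exact ⟨p.1, hpt, Prod.ext rfl ((interior_subset hpU).1 hfp)⟩
  · rintro ⟨x, hxt, rfl⟩
    have hxU := (hts hxt).2
    exact ⟨(interior_subset hxU).2 rfl, hxU, hxt⟩


noncomputable def hamiltonianField (f : ℝ × ℝ → ℝ) (p : ℝ × ℝ) : ℝ × ℝ :=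
  (-(fderiv ℝ f p (0, 1)), fderiv ℝ f p (1, 0))

def IsHamiltonianLevelCurve (f : ℝ × ℝ → ℝ) (p₀ : ℝ × ℝ) (δ : ℝ) (γ : ℝ → ℝ × ℝ) : Prop :=
  γ 0 = p₀ ∧ (∀ t ∈ Ioo (-δ) δ, HasDerivAt γ (hamiltonianField f (γ t)) t) ∧
    ∃ U ∈ 𝓝 p₀, γ '' Ioo (-δ) δ = {p | f p = f p₀} ∩ U

theorem fderiv_neg_comp_swap_apply (f : ℝ × ℝ → ℝ) (q v : ℝ × ℝ) :
    fderiv ℝ (fun p => -f p.swap) q v = -fderiv ℝ f q.swap v.swap := by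
  have : (fun p : ℝ × ℝ => -f p.swap) = -(f ∘ ContinuousLinearEquiv.prodComm ℝ ℝ ℝ) := rfl
  rw [this, fderiv_neg, ContinuousLinearEquiv.comp_right_fderiv]
  rfl

theorem hamiltonianField_neg_comp_swap (f : ℝ × ℝ → ℝ) (q : ℝ × ℝ) :
    hamiltonianField (fun p => -f p.swap) q = (hamiltonianField f q.swap).swap := by
  simp only [hamiltonianField, fderiv_neg_comp_swap_apply]
  simp

theorem IsHamiltonianLevelCurve.swap {f : ℝ × ℝ → ℝ} {p₀ : ℝ × ℝ} {δ : ℝ} {γ : ℝ → ℝ × ℝ}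
    (h : IsHamiltonianLevelCurve (fun p => -f p.swap) p₀.swap δ γ) :
    IsHamiltonianLevelCurve f p₀ δ (Prod.swap ∘ γ) := by
  obtain ⟨h₀, hγ, U, hU, himage⟩ := h
  refine ⟨by simp [h₀], fun t ht => ?_, Prod.swap '' U, ?_, ?_⟩
  · have := (ContinuousLinearEquiv.prodComm ℝ ℝ ℝ).hasFDerivAt.comp_hasDerivAt t (hγ t ht)
    rw [hamiltonianField_neg_comp_swap] at this
    exact this
  · rw [image_swap_eq_preimage_swap]
    exact continuous_swap.continuousAt.preimage_mem_nhds hU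
  · rw [image_comp, himage, image_inter Prod.swap_injective, image_swap_eq_preimage_swap]
    congr 1
    ext p
    simp

theorem fderiv_apply_fst_add_mul_fderiv_apply_snd_eq_zero {f : ℝ × ℝ → ℝ} {ψ : ℝ → ℝ} {x ψ' : ℝ}
    (hf : DifferentiableAt ℝ f (x, ψ x)) (hψ : HasDerivAt ψ ψ' x)
    (hconst : ∀ᶠ y in 𝓝 x, f (y, ψ y) = f (x, ψ x)) :
    fderiv ℝ f (x, ψ x) (1, 0) + ψ' * fderiv ℝ f (x, ψ x) (0, 1) = 0 := by
  have hchain : HasDerivAt (fun y => f (y, ψ y)) (fderiv ℝ f (x, ψ x) (1, ψ')) x :=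
    hf.hasFDerivAt.comp_hasDerivAt x ((hasDerivAt_id x).prodMk hψ)
  have hzero : HasDerivAt (fun y => f (y, ψ y)) 0 x :=
    (hasDerivAt_const x _).congr_of_eventuallyEq hconst
  have hsplit : ((1 : ℝ), ψ') = (1, 0) + ψ' • (0, 1) := by simp
  have hvanish := hchain.unique hzero
  rwa [hsplit, map_add, map_smul, smul_eq_mul] at hvanish

theorem exists_isHamiltonianLevelCurve_of_fderiv_apply_snd_ne_zero {f : ℝ × ℝ → ℝ} {p₀ : ℝ × ℝ}
    (hf : ContDiffAt ℝ 1 f p₀) (hy : fderiv ℝ f p₀ (0, 1) ≠ 0) :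
    ∃ δ > 0, ∃ γ : ℝ → ℝ × ℝ, IsHamiltonianLevelCurve f p₀ δ γ := by
  obtain ⟨ψ, s, hs, hx₀s, hψ₀, hψ, U, hU, hgraph⟩ := hf.exists_levelSet_inter_eq_graph
    ⟨ContinuousLinearEquiv.unitsEquivAut ℝ (Units.mk0 _ hy), ContinuousLinearMap.ext_ring (by simp)⟩
  have hlevel : ∀ x ∈ s, f (x, ψ x) = f p₀ := fun x hx => by
    have : (x, ψ x) ∈ {p | f p = f p₀} ∩ (U ∩ Prod.fst ⁻¹' s) :=
      hgraph s subset_rfl ▸ mem_image_of_mem _ hx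
    exact this.1
  have hgraphc : ContinuousOn (fun x => (x, ψ x)) s :=
    continuousOn_id.prodMk fun x hx => (hψ x hx).continuousAt.continuousWithinAt
  obtain ⟨V, hVf, hV, hp₀V⟩ := eventually_nhds_iff.1 (hf.eventually (by simp))
  set s' := s ∩ (fun x => (x, ψ x)) ⁻¹' V
  have hs' : IsOpen s' := hgraphc.isOpen_inter_preimage hs hV
  have hx₀s' : p₀.1 ∈ s' := ⟨hx₀s, by simpa [hψ₀] using hp₀V⟩
  set h : ℝ → ℝ := fun x => -fderiv ℝ f (x, ψ x) (0, 1)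
  have hh : ContinuousOn h s' := fun x hx =>
    (ContinuousAt.comp_continuousWithinAt (g := fderiv ℝ f) (f := fun x => (x, ψ x))
      ((hVf _ hx.2).continuousAt_fderiv one_ne_zero) (hgraphc.mono inter_subset_left x hx)
      |>.clm_apply continuousWithinAt_const).neg
  obtain ⟨δ, hδ, ξ, hξ₀, hξs', hξ, hξW⟩ :=
    exists_autonomous_ode_solution hs' hx₀s' hh (by simpa [h, hψ₀] using hy)
  refine ⟨δ, hδ, fun t => (ξ t, ψ (ξ t)), by simp [hξ₀, hψ₀], fun t ht => ?_,
    U ∩ Prod.fst ⁻¹' (ξ '' Ioo (-δ) δ),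
    inter_mem hU (continuous_fst.continuousAt.preimage_mem_nhds hξW), ?_⟩
  · obtain ⟨hxs, hxV⟩ := hξs' ht
    have hrel := fderiv_apply_fst_add_mul_fderiv_apply_snd_eq_zero
      ((hVf _ hxV).differentiableAt one_ne_zero) (hψ _ hxs).hasDerivAt
      (eventually_of_mem (hs.mem_nhds hxs) fun y hy => (hlevel y hy).trans (hlevel _ hxs).symm)
    refine ((hξ t ht).prodMk ((hψ _ hxs).hasDerivAt.comp t (hξ t ht))).congr_deriv
      (Prod.ext rfl ?_)
    simp only [hamiltonianField, h]
    linear_combination -hrel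
  · rw [hgraph _ ((image_subset_iff.2 hξs').trans inter_subset_left), image_image]

/-- If `f : ℝ² → ℝ` is C¹ with `∇f p₀ ≠ 0`, then near `p₀` the level set
`{p | f p = f p₀}` is the image of an integral curve of the Hamiltonian vector
field `H_f = (-∂f/∂y, ∂f/∂x)`: there are `δ > 0` and an integral curve
`γ : (-δ, δ) → ℝ²` of `H_f` with `γ 0 = p₀` whose image is exactly the
intersection of the level set with a neighborhood of `p₀`. -/
theorem stmt_17 (f : ℝ × ℝ → ℝ) (hf : ContDiff ℝ 1 f) (p₀ : ℝ × ℝ)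
    (hgrad : fderiv ℝ f p₀ ≠ 0) :
    ∃ δ > (0 : ℝ), ∃ γ : ℝ → ℝ × ℝ,
      γ 0 = p₀ ∧
      (∀ t ∈ Set.Ioo (-δ) δ,
        HasDerivAt γ (-(fderiv ℝ f (γ t) (0, 1)), fderiv ℝ f (γ t) (1, 0)) t) ∧
      ∃ U ∈ nhds p₀,
        γ '' Set.Ioo (-δ) δ = {p : ℝ × ℝ | f p = f p₀} ∩ U := by
  suffices ∃ δ > 0, ∃ γ, IsHamiltonianLevelCurve f p₀ δ γ from this
  by_cases hy : fderiv ℝ f p₀ (0, 1) = 0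
  · have hx : fderiv ℝ f p₀ (1, 0) ≠ 0 := fun hx => hgrad <|
      ContinuousLinearMap.prod_ext (ContinuousLinearMap.ext_ring (by simpa using hx))
        (ContinuousLinearMap.ext_ring (by simpa using hy))
    obtain ⟨δ, hδ, γ, hγ⟩ := exists_isHamiltonianLevelCurve_of_fderiv_apply_snd_ne_zero
      (f := fun p => -f p.swap) (p₀ := p₀.swap)
      (hf.comp (contDiff_snd.prodMk contDiff_fst)).neg.contDiffAt
      (by rw [fderiv_neg_comp_swap_apply]; simpa using hx)
    exact ⟨δ, hδ, _, hγ.swap⟩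
  · exact exists_isHamiltonianLevelCurve_of_fderiv_apply_snd_ne_zero hf.contDiffAt hy
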